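/- Let α > 0, K_α(r) = α r^(α−1), and suppose z is continuous and nondecreasing, and b : [0,∞) × ℝ → ℝ₊ is continuous, nondecreasing in x and locally Lipschitz in x uniformly in t on compacts, with z(t) nondecreasing in t and b(t,x) nondecreasing in t for each fixed x. Then the maximal solution y of y(t) = z(t) + ∫₀ᵗ K_α(t−s) b(s,y(s)) ds is nondecreasing on its interval of existence. -/

import Mathlib

/-!
Fix `s ≤ t = s + h` and compare `y` with its shift `y (· + h)` through `g u = (y u - y (u + h))⁺`.
Since `z` and `b` are nondecreasing in time and `b ≥ 0`, subtracting the two integral equations gives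
`g u ≤ L ∫₀ᵘ α (u - v)^(α - 1) g v dv` on `[0, s]`, with `L` a Lipschitz constant of `b` on the
compact range of `y`. This fractional Gronwall inequality forces `g = 0`: on a window of length `δ`
with `L δ^α ≤ 1/2` beyond the zero set, the maximum of `g` is at most half of itself.
-/

open MeasureTheory Set Filter

section RpowKernel

variable {α : ℝ}

lemma rpow_kernel_nonneg (hα : 0 < α) {u v : ℝ} (h : v ≤ u) : 0 ≤ α * (u - v) ^ (α - 1) :=
  mul_nonneg hα.le (Real.rpow_nonneg (sub_nonneg.2 h) _)

lemma intervalIntegrable_rpow_kernel (hα : 0 < α) (u a c : ℝ) :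
    IntervalIntegrable (fun v => α * (u - v) ^ (α - 1)) volume a c := by
  have h : IntervalIntegrable (fun x : ℝ => x ^ (α - 1)) volume (u - a) (u - c) :=
    intervalIntegral.intervalIntegrable_rpow' (by linarith)
  simpa using (h.comp_sub_left u).const_mul α

lemma intervalIntegrable_rpow_kernel_mul (hα : 0 < α) {f : ℝ → ℝ} {u a c : ℝ}
    (hf : ContinuousOn f (uIcc a c)) :
    IntervalIntegrable (fun v => α * (u - v) ^ (α - 1) * f v) volume a c :=
  (intervalIntegrable_rpow_kernel hα u a c).mul_continuousOn hf

lemma integral_rpow_kernel (hα : 0 < α) (a u : ℝ) :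
    ∫ v in a..u, α * (u - v) ^ (α - 1) = (u - a) ^ α := by
  have h := intervalIntegral.integral_comp_sub_left (a := a) (b := u)
    (fun x : ℝ => α * x ^ (α - 1)) u
  simp only [sub_self] at h
  rw [h, intervalIntegral.integral_const_mul, integral_rpow (Or.inl (by linarith)),
    sub_add_cancel, Real.zero_rpow hα.ne', sub_zero, mul_div_cancel₀ _ hα.ne']

end RpowKernel

section Gronwall

variable {α L s : ℝ} {g : ℝ → ℝ}

lemma le_mul_rpow_mul_of_isMaxOn (hα : 0 < α) (hL : 0 ≤ L) {a x : ℝ} (ha : 0 ≤ a) (hax : a ≤ x)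
    (hg : ContinuousOn g (Icc 0 x)) (hle : g x ≤ L * ∫ v in 0..x, α * (x - v) ^ (α - 1) * g v)
    (hzero : ∀ v ∈ Icc 0 a, g v = 0) (hmax : IsMaxOn g (Icc a x) x) :
    g x ≤ L * (x - a) ^ α * g x := by
  have hint : ∀ {c d : ℝ}, 0 ≤ c → d ≤ x → c ≤ d →
      IntervalIntegrable (fun v => α * (x - v) ^ (α - 1) * g v) volume c d := fun hc hd hcd =>
    intervalIntegrable_rpow_kernel_mul hα
      (hg.mono (by rw [uIcc_of_le hcd]; exact Icc_subset_Icc hc hd))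
  have hvanish : ∫ v in 0..a, α * (x - v) ^ (α - 1) * g v = 0 := by
    rw [intervalIntegral.integral_congr (g := fun _ => (0 : ℝ)) fun v hv => ?_,
      intervalIntegral.integral_zero]
    rw [uIcc_of_le ha] at hv
    simp [hzero v hv]
  calc g x ≤ L * ∫ v in 0..x, α * (x - v) ^ (α - 1) * g v := hle
    _ = L * ∫ v in a..x, α * (x - v) ^ (α - 1) * g v := by
      rw [← intervalIntegral.integral_add_adjacent_intervals
        (hint le_rfl hax ha) (hint ha le_rfl hax), hvanish, zero_add]
    _ ≤ L * ∫ v in a..x, α * (x - v) ^ (α - 1) * g x := by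
      refine mul_le_mul_of_nonneg_left (intervalIntegral.integral_mono_on hax (hint ha le_rfl hax)
        ((intervalIntegrable_rpow_kernel hα x a x).mul_const _) fun v hv => ?_) hL
      exact mul_le_mul_of_nonneg_left (hmax hv) (rpow_kernel_nonneg hα hv.2)
    _ = L * (x - a) ^ α * g x := by
      rw [intervalIntegral.integral_mul_const, integral_rpow_kernel hα, mul_assoc]

lemma eq_zero_propagate_of_le_rpow_kernel_integral (hα : 0 < α) (hg : ContinuousOn g (Icc 0 s))
    (hg0 : ∀ u ∈ Icc 0 s, 0 ≤ g u)
    (hle : ∀ u ∈ Icc 0 s, g u ≤ L * ∫ v in 0..u, α * (u - v) ^ (α - 1) * g v) (hL : 0 ≤ L)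
    {a δ : ℝ} (ha : 0 ≤ a) (hδ : L * δ ^ α ≤ 1 / 2) (hzero : ∀ u ∈ Icc 0 s, u ≤ a → g u = 0) :
    ∀ u ∈ Icc 0 s, u ≤ a + δ → g u = 0 := by
  intro u hu hua
  rcases le_or_gt u a with hua' | hau
  · exact hzero u hu hua'
  obtain ⟨x, hx, hmax⟩ := isCompact_Icc.exists_isMaxOn
    (nonempty_Icc.2 (le_min (by linarith) (hau.le.trans hu.2) : a ≤ min (a + δ) s))
    (hg.mono (Icc_subset_Icc ha (min_le_right _ _)))
  have hxs : x ≤ s := hx.2.trans (min_le_right _ _)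
  have hx0 : x ∈ Icc 0 s := ⟨ha.trans hx.1, hxs⟩
  have hgx0 : 0 ≤ g x := hg0 x hx0
  have hxδ : (x - a) ^ α ≤ δ ^ α :=
    Real.rpow_le_rpow (sub_nonneg.2 hx.1) (by linarith [hx.2, min_le_left (a + δ) s]) hα.le
  have hgx : g x ≤ g x / 2 :=
    calc g x ≤ L * (x - a) ^ α * g x :=
          le_mul_rpow_mul_of_isMaxOn hα hL ha hx.1 (hg.mono (Icc_subset_Icc le_rfl hxs))
            (hle x hx0) (fun v hv => hzero v ⟨hv.1, hv.2.trans (hx.1.trans hxs)⟩ hv.2)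
            (hmax.on_subset (Icc_subset_Icc le_rfl hx.2))
      _ ≤ L * δ ^ α * g x := by gcongr
      _ ≤ 1 / 2 * g x := by gcongr
      _ = g x / 2 := by ring
  exact le_antisymm ((hmax ⟨hau.le, le_min hua hu.2⟩).trans (by linarith)) (hg0 u hu)

theorem eqOn_zero_of_le_rpow_kernel_integral (hα : 0 < α) (hg : ContinuousOn g (Icc 0 s))
    (hg0 : ∀ u ∈ Icc 0 s, 0 ≤ g u)
    (hle : ∀ u ∈ Icc 0 s, g u ≤ L * ∫ v in 0..u, α * (u - v) ^ (α - 1) * g v) (hL : 0 ≤ L) :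
    EqOn g 0 (Icc 0 s) := by
  obtain ⟨δ, hδ, hLδ⟩ : ∃ δ > 0, L * δ ^ α ≤ 1 / 2 := by
    refine ⟨(2 * (L + 1))⁻¹ ^ α⁻¹, by positivity, ?_⟩
    rw [Real.rpow_inv_rpow (by positivity) hα.ne', ← div_eq_mul_inv,
      div_le_iff₀ (by positivity)]
    linarith
  have hstep : ∀ n : ℕ, ∀ u ∈ Icc 0 s, u ≤ n * δ → g u = 0 := by
    intro n
    induction n with
    | zero =>
      intro u hu hu0
      obtain rfl : u = 0 := le_antisymm (by simpa using hu0) hu.1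
      exact le_antisymm (by simpa using hle 0 hu) (hg0 0 hu)
    | succ n ih =>
      rw [Nat.cast_succ, add_one_mul]
      exact eq_zero_propagate_of_le_rpow_kernel_integral hα hg hg0 hle hL (by positivity) hLδ ih
  intro u hu
  obtain ⟨n, hn⟩ := exists_nat_ge (u / δ)
  exact hstep n u hu (by rwa [div_le_iff₀ hδ] at hn)

end Gronwall

lemma sub_le_mul_posPart_sub {f : ℝ → ℝ} (hf : Monotone f) {L x x' : ℝ}
    (hlip : |f x - f x'| ≤ L * |x - x'|) : f x - f x' ≤ L * (x - x')⁺ := by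
  rcases le_or_gt x x' with h | h
  · rw [posPart_eq_zero.2 (sub_nonpos.2 h), mul_zero]
    exact sub_nonpos.2 (hf h)
  · rw [posPart_eq_self.2 (sub_nonneg.2 h.le), ← abs_of_pos (sub_pos.2 h)]
    exact (le_abs_self _).trans hlip

lemma sub_comp_add_le_mul_rpow_kernel_integral {α : ℝ} (hα : 0 < α) {z F y G : ℝ → ℝ}
    {s h L : ℝ} (hh : 0 ≤ h) (hz : MonotoneOn z (Ici 0)) (hF : ContinuousOn F (Icc 0 (s + h)))
    (hF0 : ∀ w ∈ Icc 0 (s + h), 0 ≤ F w)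
    (hy : ∀ u ∈ Icc 0 (s + h), y u = z u + ∫ w in 0..u, α * (u - w) ^ (α - 1) * F w)
    (hG : ContinuousOn G (Icc 0 s)) (hFG : ∀ w ∈ Icc 0 s, F w - F (w + h) ≤ L * G w)
    {u : ℝ} (hu : u ∈ Icc 0 s) :
    y u - y (u + h) ≤ L * ∫ w in 0..u, α * (u - w) ^ (α - 1) * G w := by
  obtain ⟨hu0, hus⟩ := hu
  have hFh : ContinuousOn (fun w => F (w + h)) (Icc (-h) s) :=
    hF.comp (continuous_add_const h).continuousOn
      fun w hw => ⟨by linarith [hw.1], by linarith [hw.2]⟩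
  have hint : ∀ {f : ℝ → ℝ} {c d : ℝ}, ContinuousOn f (Icc c d) → c ≤ d →
      IntervalIntegrable (fun w => α * (u - w) ^ (α - 1) * f w) volume c d :=
    fun hf hcd => intervalIntegrable_rpow_kernel_mul hα (by rwa [uIcc_of_le hcd])
  have hFu := hint (hF.mono (Icc_subset_Icc le_rfl (by linarith))) hu0
  have hFhu := hint (hFh.mono (Icc_subset_Icc (by linarith) hus)) hu0
  -- the substitution `w ↦ w + h` puts `y (u + h)` on the kernel of `y u`
  have hshift : ∫ w in -h..u, α * (u - w) ^ (α - 1) * F (w + h) =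
      ∫ w in 0..u + h, α * (u + h - w) ^ (α - 1) * F w := by
    simpa using intervalIntegral.integral_comp_add_right (a := -h) (b := u)
      (fun w => α * (u + h - w) ^ (α - 1) * F w) h
  have hsplit := intervalIntegral.integral_add_adjacent_intervals
    (hint (hFh.mono (Icc_subset_Icc le_rfl (by linarith))) (by linarith : -h ≤ 0)) hFhu
  have hhead : 0 ≤ ∫ w in -h..0, α * (u - w) ^ (α - 1) * F (w + h) :=
    intervalIntegral.integral_nonneg (by linarith) fun w hw =>
      mul_nonneg (rpow_kernel_nonneg hα (by linarith [hw.2]))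
        (hF0 _ ⟨by linarith [hw.1], by linarith [hw.2]⟩)
  have hdiff : ∫ w in 0..u, α * (u - w) ^ (α - 1) * F w - α * (u - w) ^ (α - 1) * F (w + h) ≤
      L * ∫ w in 0..u, α * (u - w) ^ (α - 1) * G w := by
    rw [← intervalIntegral.integral_const_mul]
    refine intervalIntegral.integral_mono_on hu0 (hFu.sub hFhu)
      ((hint (hG.mono (Icc_subset_Icc le_rfl hus)) hu0).const_mul L) fun w hw => ?_
    rw [← mul_sub, mul_left_comm]
    exact mul_le_mul_of_nonneg_left (hFG w ⟨hw.1, hw.2.trans hus⟩) (rpow_kernel_nonneg hα hw.2)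
  have hzu : z u ≤ z (u + h) := hz hu0 (by simp only [mem_Ici]; linarith) (by linarith)
  rw [hy u ⟨hu0, by linarith⟩, hy (u + h) ⟨by linarith, by linarith⟩, ← hshift, ← hsplit]
  rw [intervalIntegral.integral_sub hFu hFhu] at hdiff
  linarith

lemma exists_lipschitz_on_range_of_locally_lipschitz {b : ℝ → ℝ → ℝ}
    (hb_lip : ∀ T > 0, ∀ R > 0, ∃ L : ℝ, ∀ t ∈ Icc (0:ℝ) T, ∀ x ∈ Icc (-R) R, ∀ x' ∈ Icc (-R) R,
      |b t x - b t x'| ≤ L * |x - x'|)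
    {y : ℝ → ℝ} {T : ℝ} (hy : ContinuousOn y (Icc 0 T)) :
    ∃ L ≥ 0, ∀ t ∈ Icc 0 T, ∀ u ∈ Icc 0 T, ∀ u' ∈ Icc 0 T,
      |b t (y u) - b t (y u')| ≤ L * |y u - y u'| := by
  obtain ⟨R, hR⟩ := isCompact_Icc.exists_bound_of_continuousOn hy
  obtain ⟨L, hL⟩ := hb_lip (|T| + 1) (by positivity) (|R| + 1) (by positivity)
  have hyR : ∀ u ∈ Icc 0 T, y u ∈ Icc (-(|R| + 1)) (|R| + 1) := fun u hu =>
    abs_le.1 (((Real.norm_eq_abs _).symm.trans_le (hR u hu)).trans (by linarith [le_abs_self R]))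
  refine ⟨max L 0, le_max_right _ _, fun t ht u hu u' hu' => ?_⟩
  exact (hL t ⟨ht.1, ht.2.trans (by linarith [le_abs_self T])⟩ _ (hyR u hu) _ (hyR u' hu')).trans
    (mul_le_mul_of_nonneg_right (le_max_left _ _) (abs_nonneg _))

lemma exists_sub_comp_add_le_mul_posPart {b : ℝ → ℝ → ℝ}
    (hb_mono_x : ∀ t ≥ (0:ℝ), Monotone (b t))
    (hb_mono_t : ∀ x : ℝ, MonotoneOn (fun t => b t x) (Ici 0))
    (hb_lip : ∀ T > 0, ∀ R > 0, ∃ L : ℝ, ∀ t ∈ Icc (0:ℝ) T, ∀ x ∈ Icc (-R) R, ∀ x' ∈ Icc (-R) R,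
      |b t x - b t x'| ≤ L * |x - x'|)
    {y : ℝ → ℝ} {s h : ℝ} (hh : 0 ≤ h) (hy : ContinuousOn y (Icc 0 (s + h))) :
    ∃ L ≥ 0, ∀ w ∈ Icc 0 s, b w (y w) - b (w + h) (y (w + h)) ≤ L * (y w - y (w + h))⁺ := by
  obtain ⟨L, hL0, hL⟩ := exists_lipschitz_on_range_of_locally_lipschitz hb_lip hy
  refine ⟨L, hL0, fun w hw => ?_⟩
  have hw' : w ∈ Icc 0 (s + h) := ⟨hw.1, by linarith [hw.2]⟩
  have hwh : w + h ∈ Icc 0 (s + h) := ⟨by linarith [hw.1], by linarith [hw.2]⟩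
  calc b w (y w) - b (w + h) (y (w + h)) ≤ b w (y w) - b w (y (w + h)) :=
        sub_le_sub_left (hb_mono_t _ hw.1 hwh.1 (by linarith)) _
    _ ≤ L * (y w - y (w + h))⁺ :=
        sub_le_mul_posPart_sub (hb_mono_x w hw.1) (hL w hw' w hw' _ hwh)

theorem volterra_monotone_general
    (α : ℝ) (hα : 0 < α)
    (z : ℝ → ℝ)
    (hz_mono : MonotoneOn z (Ici 0))
    (b : ℝ → ℝ → ℝ)
    (hb_cont : ContinuousOn (fun p : ℝ × ℝ => b p.1 p.2) (Ici 0 ×ˢ univ))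
    (hb_nonneg : ∀ t x, 0 ≤ t → 0 ≤ b t x)
    (hb_mono_x : ∀ t ≥ (0:ℝ), Monotone (b t))
    (hb_mono_t : ∀ x : ℝ, MonotoneOn (fun t => b t x) (Ici 0))
    (hb_lip : ∀ T > 0, ∀ R > 0, ∃ L : ℝ, ∀ t ∈ Icc (0:ℝ) T, ∀ x ∈ Icc (-R) R, ∀ x' ∈ Icc (-R) R,
      |b t x - b t x'| ≤ L * |x - x'|)
    (Tinf : ENNReal) (y : ℝ → ℝ)
    -- `y` is a continuous solution on `[0, T∞)`
    (hy_cont : ∀ t : ℝ, 0 ≤ t → ENNReal.ofReal t < Tinf → ContinuousOn y (Icc 0 t))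
    (hy_sol : ∀ t : ℝ, 0 ≤ t → ENNReal.ofReal t < Tinf →
      y t = z t + ∫ s in (0:ℝ)..t, α * (t - s) ^ (α - 1) * b s (y s)) :
    ∀ s t : ℝ, 0 ≤ s → s ≤ t → ENNReal.ofReal t < Tinf → y s ≤ y t := by
  intro s t hs hst ht
  obtain ⟨h, hh, rfl⟩ : ∃ h, 0 ≤ h ∧ t = s + h := ⟨t - s, by linarith, by ring⟩
  have hy : ContinuousOn y (Icc 0 (s + h)) := hy_cont _ (by linarith) ht
  have hsol : ∀ u ∈ Icc 0 (s + h), y u = z u + ∫ w in 0..u, α * (u - w) ^ (α - 1) * b w (y w) :=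
    fun u hu => hy_sol u hu.1 ((ENNReal.ofReal_le_ofReal hu.2).trans_lt ht)
  have hF : ContinuousOn (fun w => b w (y w)) (Icc 0 (s + h)) :=
    hb_cont.comp (continuousOn_id.prodMk hy) fun w hw => ⟨hw.1, trivial⟩
  have hmaps : MapsTo (· + h) (Icc 0 s) (Icc 0 (s + h)) :=
    fun w hw => ⟨by linarith [hw.1], by linarith [hw.2]⟩
  obtain ⟨L, hL0, hFg⟩ := exists_sub_comp_add_le_mul_posPart hb_mono_x hb_mono_t hb_lip hh hy
  have hg : ContinuousOn (fun u => (y u - y (u + h))⁺) (Icc 0 s) :=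
    ((hy.mono (Icc_subset_Icc le_rfl (by linarith))).sub
      (hy.comp (continuous_add_const h).continuousOn hmaps)).sup continuousOn_const
  have hgron : ∀ u ∈ Icc 0 s,
      (y u - y (u + h))⁺ ≤ L * ∫ v in 0..u, α * (u - v) ^ (α - 1) * (y v - y (v + h))⁺ :=
    fun u hu => sup_le (sub_comp_add_le_mul_rpow_kernel_integral hα hh hz_mono hF
        (fun w hw => hb_nonneg _ _ hw.1) hsol hg hFg hu)
      (mul_nonneg hL0 (intervalIntegral.integral_nonneg hu.1 fun v hv =>
        mul_nonneg (rpow_kernel_nonneg hα hv.2) (posPart_nonneg _)))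
  have hgs := eqOn_zero_of_le_rpow_kernel_integral hα hg (fun _ _ => posPart_nonneg _) hgron hL0
    ⟨hs, le_rfl⟩
  linarith [posPart_eq_zero.1 hgs]

/-- **Monotonicity of solutions of Volterra integral equations.**
If `z` is continuous and nondecreasing and `b ≥ 0` is continuous, nondecreasing in each
variable and locally Lipschitz in `x` uniformly in `t` on compacts, then the maximal
solution `y` of `y(t) = z(t) + ∫₀ᵗ α (t-s)^(α-1) b(s, y(s)) ds` is nondecreasing
on its interval of existence `[0, T∞)`. -/
theorem volterra_monotone
    (α : ℝ) (hα : 0 < α)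
    (z : ℝ → ℝ) (hz : ContinuousOn z (Ici 0))
    (hz_mono : MonotoneOn z (Ici 0))
    (b : ℝ → ℝ → ℝ)
    (hb_cont : ContinuousOn (fun p : ℝ × ℝ => b p.1 p.2) (Ici 0 ×ˢ univ))
    (hb_nonneg : ∀ t x, 0 ≤ t → 0 ≤ b t x)
    (hb_mono_x : ∀ t ≥ (0:ℝ), Monotone (b t))
    (hb_mono_t : ∀ x : ℝ, MonotoneOn (fun t => b t x) (Ici 0))
    (hb_lip : ∀ T > 0, ∀ R > 0, ∃ L : ℝ, ∀ t ∈ Icc (0:ℝ) T, ∀ x ∈ Icc (-R) R, ∀ x' ∈ Icc (-R) R,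
      |b t x - b t x'| ≤ L * |x - x'|)
    (Tinf : ENNReal) (y : ℝ → ℝ)
    -- `y` is a continuous solution on `[0, T∞)`
    (hy_cont : ∀ t : ℝ, 0 ≤ t → ENNReal.ofReal t < Tinf → ContinuousOn y (Icc 0 t))
    (hy_sol : ∀ t : ℝ, 0 ≤ t → ENNReal.ofReal t < Tinf →
      y t = z t + ∫ s in (0:ℝ)..t, α * (t - s) ^ (α - 1) * b s (y s))
    -- blow-up at `T∞` when `T∞ < ∞` (maximality)
    (hy_blowup : Tinf ≠ ⊤ →
      Tendsto y (nhdsWithin Tinf.toReal (Iio Tinf.toReal)) atTop) :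
    ∀ s t : ℝ, 0 ≤ s → s ≤ t → ENNReal.ofReal t < Tinf → y s ≤ y t :=
  volterra_monotone_general α hα z hz_mono b hb_cont hb_nonneg hb_mono_x hb_mono_t hb_lip Tinf y
    hy_cont hy_sol
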